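/- Let (X, f) be a dynamical system, where X is a compact uniform space and f : X → X is a continuous surjection. For every entourage E there is an entourage D such that for every D-pseudo orbit (x_i)_{i∈ℕ} of f there exist an E-pseudo orbit (y_i)_{i∈ℕ} with all y_i ∈ CR(f) and an integer N > 0 such that (x_i, y_i) ∈ E for every i ≥ N. -/

import Mathlib

/-!
By compactness, for small `D` every point carrying a `D`-cycle is close to `CR f`: a limit of
points carrying ever finer cycles is chain recurrent. A fine pseudo orbit keeps returning near
its cluster points, and these returns close up to fine cycles, so all but finitely many of its
points are close to `CR f`; moving them onto `CR f` still gives a pseudo orbit, by uniform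
continuity. The finitely many initial terms are filled in backwards, since every point of `CR f`
has an approximate preimage in `CR f`: the last point of a fine cycle through it.
-/

open Filter Set Function

section Defs

variable {X : Type*} [UniformSpace X]

/-- A `D`-chain from `x` to `y`: a finite sequence `x = c 0, c 1, …, c n` (`n ≥ 1`)
with `c n = y` and `(f (c i), c (i+1)) ∈ D` for all `i < n`. -/
def DChain (f : X → X) (D : Set (X × X)) (x y : X) : Prop :=
  ∃ n : ℕ, 1 ≤ n ∧ ∃ c : ℕ → X, c 0 = x ∧ c n = y ∧ ∀ i < n, (f (c i), c (i + 1)) ∈ D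

/-- A `D`-chain from `x` to `y` contained in the set `S`. -/
def DChainIn (f : X → X) (D : Set (X × X)) (S : Set X) (x y : X) : Prop :=
  ∃ n : ℕ, 1 ≤ n ∧ ∃ c : ℕ → X, c 0 = x ∧ c n = y ∧ (∀ i ≤ n, c i ∈ S) ∧
    ∀ i < n, (f (c i), c (i + 1)) ∈ D

/-- The set of chain-recurrent points of `f`. -/
def CR (f : X → X) : Set X :=
  {x | ∀ D ∈ uniformity X, DChain f D x x}

/-- The set of non-wandering points of `f`. -/
def NonWandering (f : X → X) : Set X :=
  {x | ∀ U : Set X, IsOpen U → x ∈ U → ∃ n : ℕ, 1 ≤ n ∧ (f^[n] '' U ∩ U).Nonempty}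

/-- `(x i)` is a `D`-pseudo orbit on the set `A ⊆ ℕ`. -/
def PseudoOrbitOn (f : X → X) (D : Set (X × X)) (x : ℕ → X) (A : Set ℕ) : Prop :=
  ∀ i ∈ A, (f (x i), x (i + 1)) ∈ D

/-- `(x i)` is `E`-traced by `y` on the set `B ⊆ ℕ`. -/
def TracedOn (f : X → X) (E : Set (X × X)) (x : ℕ → X) (y : X) (B : Set ℕ) : Prop :=
  ∀ i ∈ B, (f^[i] y, x i) ∈ E

/-- Topological shadowing. -/
def TopShadowing (f : X → X) : Prop :=
  ∀ E ∈ uniformity X, ∃ D ∈ uniformity X,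
    ∀ x : ℕ → X, PseudoOrbitOn f D x Set.univ → ∃ y : X, TracedOn f E x y Set.univ

/-- Topological `(F, G)`-shadowing for families `F`, `G` of subsets of `ℕ`. -/
def FGShadowing (f : X → X) (F G : Set (Set ℕ)) : Prop :=
  ∀ E ∈ uniformity X, ∃ D ∈ uniformity X,
    ∀ x : ℕ → X, (∃ A ∈ F, PseudoOrbitOn f D x A) →
      ∃ y : X, ∃ B ∈ G, TracedOn f E x y B

end Defs

/-- A set `A ⊆ ℕ` is syndetic: gaps are bounded. -/
def Syndetic (A : Set ℕ) : Prop :=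
  ∃ M : ℕ, ∀ k : ℕ, ∃ j ∈ A, k ≤ j ∧ j ≤ k + M

/-- A set `A ⊆ ℕ` is thick: contains arbitrarily long blocks of consecutive numbers. -/
def Thick (A : Set ℕ) : Prop :=
  ∀ n : ℕ, ∃ k : ℕ, ∀ i < n, k + i ∈ A

/-- A set `A ⊆ ℕ` is thickly syndetic. -/
def ThicklySyndetic (A : Set ℕ) : Prop :=
  ∀ n : ℕ, Syndetic {k : ℕ | ∀ i < n, k + i ∈ A}

/-- A set `A ⊆ ℕ` is piecewise syndetic. -/
def PiecewiseSyndetic (A : Set ℕ) : Prop :=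
  ∃ T S : Set ℕ, Thick T ∧ Syndetic S ∧ A = T ∩ S

/-- The family of thick subsets of `ℕ`. -/
def thickFamily : Set (Set ℕ) := {A | Thick A}

/-- The family of piecewise syndetic subsets of `ℕ`. -/
def psFamily : Set (Set ℕ) := {A | PiecewiseSyndetic A}

open scoped Classical in
/-- The lower density of a subset of `ℕ`. -/
noncomputable def lowerDensity (A : Set ℕ) : ℝ :=
  Filter.atTop.liminf fun n : ℕ => ((Finset.range n).filter (· ∈ A)).card / (n : ℝ)

/-- The family of subsets of `ℕ` of lower density `1`. -/
noncomputable def densityOneFamily : Set (Set ℕ) := {A | lowerDensity A = 1}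

section Dyn

variable {X : Type*} [UniformSpace X]

/-- `x` is a minimal point of `f`. -/
def MinimalPt (f : X → X) (x : X) : Prop :=
  ∀ U : Set X, IsOpen U → x ∈ U → Syndetic {n : ℕ | f^[n] x ∈ U}

/-- `(x, y)` is a syndetically proximal pair for `f`. -/
def SyndProx (f : X → X) (x y : X) : Prop :=
  ∀ E ∈ uniformity X, Syndetic {n : ℕ | (f^[n] x, f^[n] y) ∈ E}

end Dyn

open scoped Uniformity SetRel Topology

section Chains

variable {X : Type*} {f : X → X}

lemma DChain.mono {D D' : Set (X × X)} (h : D ⊆ D') {a b : X} (hc : DChain f D a b) :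
    DChain f D' a b := by
  obtain ⟨n, hn, c, hc0, hcn, hstep⟩ := hc
  exact ⟨n, hn, c, hc0, hcn, fun i hi => h (hstep i hi)⟩

lemma PseudoOrbitOn.dChain {D : Set (X × X)} {x : ℕ → X} (hx : PseudoOrbitOn f D x univ)
    {i j : ℕ} (hij : i < j) : DChain f D (x i) (x j) := by
  refine ⟨j - i, by omega, fun k => x (i + k), rfl, by simp only [Nat.add_sub_cancel' hij.le], ?_⟩
  intro k _
  simpa only [Nat.add_assoc] using hx (i + k) (mem_univ _)

lemma DChain.comp_ends {D R S : SetRel X X} [R.IsRefl] [S.IsRefl] {a b z z' : X}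
    (hc : DChain f D a b) (ha : (f z, f a) ∈ R) (hb : (b, z') ∈ S) :
    DChain f (R ○ D ○ S) z z' := by
  obtain ⟨n, hn, c, hc0, hcn, hstep⟩ := hc
  let c' : ℕ → X := fun k => if k = 0 then z else if k = n then z' else c k
  refine ⟨n, hn, c', by simp [c'], by simp [c', show n ≠ 0 by omega], fun i hi => ?_⟩
  have hstart : (f (c' i), f (c i)) ∈ R := by
    by_cases hi0 : i = 0
    · subst hi0; simpa [c', hc0] using ha
    · simpa [c', hi0, hi.ne] using R.rfl
  have hend : (c (i + 1), c' (i + 1)) ∈ S := by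
    by_cases hin : i + 1 = n
    · simpa [c', hin, hcn, show n ≠ 0 by omega] using hb
    · simpa [c', hin] using S.rfl
  exact SetRel.prodMk_mem_comp (SetRel.prodMk_mem_comp hstart (hstep i hi)) hend

lemma DChain.exists_rotate {D : Set (X × X)} {z : X} (h : DChain f D z z) :
    ∃ p, DChain f D p p ∧ (f p, z) ∈ D := by
  obtain ⟨n, hn, c, hc0, hcn, hstep⟩ := h
  have hlast : (f (c (n - 1)), z) ∈ D := by
    simpa [Nat.sub_add_cancel hn, hcn] using hstep (n - 1) (by omega)
  refine ⟨c (n - 1), ⟨n, hn, fun k => if k = 0 then c (n - 1) else c (k - 1), by simp,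
    by simp [show n ≠ 0 by omega], fun i hi => ?_⟩, hlast⟩
  rcases i with _ | i
  · simpa [hc0] using hlast
  · simpa using hstep i (by omega)

end Chains

section UniformlyContinuous

variable {X : Type*} [UniformSpace X] {f : X → X}

lemma exists_dChain_of_mem_ball (hf : UniformContinuous f) {D : SetRel X X} (hD : D ∈ 𝓤 X) :
    ∃ W ∈ 𝓤 X, W ⊆ D ∧ ∀ z a b : X, (z, a) ∈ W → (z, b) ∈ W → DChain f W a b →
      DChain f D z z := by
  obtain ⟨T, hT, hTsymm, hTD⟩ := comp_comp_symm_mem_uniformity_sets hD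
  have := isRefl_of_mem_uniformity hT
  refine ⟨T ∩ Prod.map f f ⁻¹' T, inter_mem hT (hf hT), ?_, fun z a b ha hb hc => ?_⟩
  · exact inter_subset_left.trans ((subset_comp_self_of_mem_uniformity hT).trans
      (SetRel.left_subset_comp.trans hTD))
  · have hcT : DChain f T a b := hc.mono inter_subset_left
    exact (hcT.comp_ends (R := T) (S := T) ha.2 (SetRel.symm T hb.1)).mono hTD

lemma mem_CR_of_forall_mem_closure (hf : UniformContinuous f) {z : X}
    (h : ∀ D ∈ 𝓤 X, z ∈ closure {p | DChain f D p p}) : z ∈ CR f := by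
  intro D hD
  obtain ⟨W, hW, -, hWD⟩ := exists_dChain_of_mem_ball hf hD
  obtain ⟨p, hzp, hp⟩ := mem_closure_iff_nhds.1 (h W hW) _ (UniformSpace.ball_mem_nhds z hW)
  exact hWD z p p hzp hzp hp

end UniformlyContinuous

section Compact

variable {X : Type*} [UniformSpace X] [CompactSpace X] {f : X → X}

lemma exists_mem_uniformity_cycles_subset (hf : Continuous f) {U : Set X}
    (hU : U ∈ 𝓝ˢ (CR f)) : ∃ D ∈ 𝓤 X, {z | DChain f D z z} ⊆ U := by
  by_contra! hbad
  let S : SetRel X X → Set X := fun D => {z | DChain f D z z} \ U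
  have hS : Monotone S := fun D D' h z hz => ⟨hz.1.mono h, hz.2⟩
  have : ((𝓤 X).lift' S).NeBot := (lift'_neBot_iff hS).2 fun D hD => by
    obtain ⟨z, hz, hzU⟩ := not_subset.1 (hbad D hD)
    exact ⟨z, hz, hzU⟩
  obtain ⟨z, hz⟩ := exists_clusterPt_of_compactSpace ((𝓤 X).lift' S)
  have hclosure : ∀ D ∈ 𝓤 X, z ∈ closure (S D) := fun D hD =>
    hz.mem_closure_of_mem _ (mem_lift' hD)
  have hzCR : z ∈ CR f :=
    mem_CR_of_forall_mem_closure (CompactSpace.uniformContinuous_of_continuous hf)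
      fun D hD => closure_mono sdiff_subset (hclosure D hD)
  have hzU : z ∈ (interior U)ᶜ :=
    closure_compl (s := U) ▸ closure_mono (fun _ hp => hp.2) (hclosure univ univ_mem)
  exact hzU (subset_interior_iff_mem_nhdsSet.2 hU hzCR)

lemma exists_approx_preimage_mem_CR (hf : Continuous f) {E : SetRel X X} (hE : E ∈ 𝓤 X)
    {z : X} (hz : z ∈ CR f) : ∃ w ∈ CR f, (f w, z) ∈ E := by
  obtain ⟨T, hT, -, hTE⟩ := comp_symm_mem_uniformity_sets hE
  have hfT : Prod.map f f ⁻¹' T ∈ 𝓤 X :=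
    CompactSpace.uniformContinuous_of_continuous hf hT
  obtain ⟨D, hD, hDU⟩ := exists_mem_uniformity_cycles_subset hf
    (U := {p | ∃ w ∈ CR f, (f w, f p) ∈ T}) <| mem_nhdsSet_iff_forall.2 fun w hw =>
      mem_of_superset (UniformSpace.ball_mem_nhds w hfT) fun p hp => ⟨w, hw, hp⟩
  obtain ⟨p, hp, hpz⟩ := (hz _ (inter_mem hD hT)).exists_rotate
  obtain ⟨w, hw, hwp⟩ := hDU (hp.mono inter_subset_left)
  exact ⟨w, hw, hTE (SetRel.prodMk_mem_comp hwp hpz.2)⟩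

lemma exists_backward_pseudoOrbit_mem_CR (hf : Continuous f) {E : SetRel X X} (hE : E ∈ 𝓤 X)
    {z : X} (hz : z ∈ CR f) :
    ∃ u : ℕ → X, u 0 = z ∧ (∀ k, u k ∈ CR f) ∧ ∀ k, (f (u (k + 1)), u k) ∈ E := by
  choose pre hpreCR hpre using fun w : CR f => exists_approx_preimage_mem_CR hf hE w.2
  let step : CR f → CR f := fun w => ⟨pre w, hpreCR w⟩
  refine ⟨fun k => step^[k] ⟨z, hz⟩, rfl, fun k => (step^[k] _).2, fun k => ?_⟩
  simpa only [iterate_succ_apply'] using hpre (step^[k] ⟨z, hz⟩)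

lemma exists_pseudoOrbit_mem_CR_of_tail (hf : Continuous f) {E : SetRel X X} (hE : E ∈ 𝓤 X)
    {N : ℕ} {g : ℕ → X} (hgCR : ∀ i, N ≤ i → g i ∈ CR f)
    (hg : ∀ i, N ≤ i → (f (g i), g (i + 1)) ∈ E) :
    ∃ y : ℕ → X, (∀ i, y i ∈ CR f) ∧ PseudoOrbitOn f E y univ ∧ ∀ i, N ≤ i → y i = g i := by
  obtain ⟨u, hu0, huCR, hu⟩ := exists_backward_pseudoOrbit_mem_CR hf hE (hgCR N le_rfl)
  refine ⟨fun i => if N ≤ i then g i else u (N - i), fun i => ?_, fun i _ => ?_,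
    fun i hi => if_pos hi⟩
  · dsimp only
    split_ifs with hi
    exacts [hgCR i hi, huCR _]
  · by_cases hi : N ≤ i
    · simpa [hi, hi.trans i.le_succ] using hg i hi
    · rcases (Nat.succ_le_of_lt (not_le.1 hi)).eq_or_lt with hNi | hNi
      · simpa [hi, ← hNi, hu0] using hu 0
      · simpa [hi, not_le.2 hNi, show N - i = N - (i + 1) + 1 by omega] using hu (N - (i + 1))

lemma exists_lt_mem_ball_of_frequently {x : ℕ → X} {p : ℕ → Prop} (hp : ∃ᶠ i in atTop, p i)
    {W : SetRel X X} (hW : W ∈ 𝓤 X) :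
    ∃ z i j, i < j ∧ p i ∧ (z, x i) ∈ W ∧ (z, x j) ∈ W := by
  have : (atTop ⊓ 𝓟 {i | p i}).NeBot := frequently_mem_iff_neBot.1 hp
  obtain ⟨z, hz⟩ := exists_clusterPt_of_compactSpace (map x (atTop ⊓ 𝓟 {i | p i}))
  have hnear : ∃ᶠ i in atTop, p i ∧ (z, x i) ∈ W := frequently_inf_principal.1 <|
    mapClusterPt_iff_frequently.1 hz _ (UniformSpace.ball_mem_nhds z hW)
  obtain ⟨i, -, hpi, hi⟩ := frequently_atTop.1 hnear 0
  obtain ⟨j, hij, -, hj⟩ := frequently_atTop.1 hnear (i + 1)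
  exact ⟨z, i, j, hij, hpi, hi, hj⟩

/-- By compactness a pseudo orbit returns near its earlier points, and each such return closes up
to a fine chain cycle, which lies close to `CR f`. -/
lemma eventually_near_CR (hf : Continuous f) {V : SetRel X X} (hV : V ∈ 𝓤 X) :
    ∃ D ∈ 𝓤 X, ∀ x : ℕ → X, PseudoOrbitOn f D x univ →
      ∀ᶠ i in atTop, ∃ w ∈ CR f, (x i, w) ∈ V := by
  obtain ⟨T, hT, hTsymm, hTV⟩ := comp_symm_mem_uniformity_sets hV
  obtain ⟨D₀, hD₀, hD₀U⟩ := exists_mem_uniformity_cycles_subset hf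
    (U := {z | ∃ w ∈ CR f, (z, w) ∈ T}) <| mem_nhdsSet_iff_forall.2 fun w hw =>
      mem_of_superset (mem_nhds_right w hT) fun z hz => ⟨w, hw, hz⟩
  obtain ⟨W, hW, hWsub, hWcycle⟩ := exists_dChain_of_mem_ball
    (CompactSpace.uniformContinuous_of_continuous hf) (inter_mem hD₀ hT)
  refine ⟨W, hW, fun x hx => ?_⟩
  by_contra hbad
  obtain ⟨z, i, j, hij, hi, hzi, hzj⟩ :=
    exists_lt_mem_ball_of_frequently (not_eventually.1 hbad) hW
  obtain ⟨w, hw, hzw⟩ := hD₀U ((hWcycle z _ _ hzi hzj (hx.dChain hij)).mono inter_subset_left)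
  exact hi ⟨w, hw, hTV (SetRel.prodMk_mem_comp (SetRel.symm T (hWsub hzi).2) hzw)⟩

end Compact

theorem pseudoOrbit_eventually_approx_in_CR_general
    {X : Type*} [UniformSpace X] [CompactSpace X]
    (f : X → X) (hf : Continuous f) :
    ∀ E ∈ uniformity X, ∃ D ∈ uniformity X,
      ∀ x : ℕ → X, PseudoOrbitOn f D x Set.univ →
        ∃ y : ℕ → X, (∀ i : ℕ, y i ∈ CR f) ∧ PseudoOrbitOn f E y Set.univ ∧
          ∃ N : ℕ, 0 < N ∧ ∀ i : ℕ, N ≤ i → (x i, y i) ∈ E := by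
  intro E hE
  obtain ⟨T, hT, hTsymm, hTE⟩ := comp_comp_symm_mem_uniformity_sets hE
  have := isRefl_of_mem_uniformity hT
  have hTE' : T ⊆ E := SetRel.left_subset_comp.trans (SetRel.left_subset_comp.trans hTE)
  have hV : T ∩ Prod.map f f ⁻¹' T ∈ 𝓤 X :=
    inter_mem hT (CompactSpace.uniformContinuous_of_continuous hf hT)
  obtain ⟨D, hD, hDnear⟩ := eventually_near_CR hf hV
  refine ⟨D ∩ T, inter_mem hD hT, fun x hx => ?_⟩
  obtain ⟨N, hN⟩ := eventually_atTop.1 (hDnear x fun i _ => (hx i trivial).1)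
  have : Nonempty X := ⟨x 0⟩
  choose! g hgCR hg using hN
  obtain ⟨y, hyCR, hy, hyg⟩ := exists_pseudoOrbit_mem_CR_of_tail hf hE
    (N := N + 1) (g := g) (fun i hi => hgCR i (by omega)) fun i hi =>
      hTE <| SetRel.prodMk_mem_comp (SetRel.prodMk_mem_comp
        (SetRel.symm T (hg i (by omega)).2) (hx i trivial).2) (hg (i + 1) (by omega)).1
  exact ⟨y, hyCR, hy, N + 1, N.succ_pos, fun i hi => hyg i hi ▸ hTE' (hg i (by omega)).1⟩

/-- every D-pseudo orbit is eventually E-approximated by an E-pseudo orbit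
contained in CR(f). -/
theorem pseudoOrbit_eventually_approx_in_CR
    {X : Type*} [UniformSpace X] [CompactSpace X]
    (f : X → X) (hf : Continuous f) (hsurj : Function.Surjective f) :
    ∀ E ∈ uniformity X, ∃ D ∈ uniformity X,
      ∀ x : ℕ → X, PseudoOrbitOn f D x Set.univ →
        ∃ y : ℕ → X, (∀ i : ℕ, y i ∈ CR f) ∧ PseudoOrbitOn f E y Set.univ ∧
          ∃ N : ℕ, 0 < N ∧ ∀ i : ℕ, N ≤ i → (x i, y i) ∈ E :=
  pseudoOrbit_eventually_approx_in_CR_general f hf
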